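/- Let f : ℝ → ℝ be a real-valued characteristic function of a probability measure on ℝ satisfying f(2s) = 2·f(s)² − 1 for all s ∈ ℝ. Then there exists a real number a such that f(s) = cos(a·s) for all s ∈ ℝ. -/

import Mathlib

open MeasureTheory Real

/-!
The identity `cos² t = (1 + cos 2t) / 2` turns the functional equation into
`Var[cos (s X)] = (1 + f (2s)) / 2 - f(s)² = 0`, so for every `s` the variable `cos (s X)` is a.s.
equal to the constant `f s`. Intersecting these events over rational `s` gives one point `a` with
`cos (s a) = f s` for all rational `s`, and continuity of both sides extends this to all `s`.
-/

open ProbabilityTheory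

section

variable {μ : Measure ℝ}

lemma memLp_cos_mul [IsFiniteMeasure μ] (s : ℝ) (p : ENNReal) :
    MemLp (fun x => cos (s * x)) p μ :=
  .of_bound (by fun_prop : Continuous fun x => cos (s * x)).aestronglyMeasurable 1
    (.of_forall fun x => by simpa using abs_cos_le_one (s * x))

lemma continuous_integral_cos_mul [IsFiniteMeasure μ] :
    Continuous fun s => ∫ x, cos (s * x) ∂μ :=
  continuous_of_dominated (bound := fun _ => 1)
    (fun s => (memLp_cos_mul s 1).aestronglyMeasurable)
    (fun s => .of_forall fun x => by simpa using abs_cos_le_one (s * x))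
    (integrable_const 1) (.of_forall fun x => by fun_prop)

lemma variance_cos_mul [IsProbabilityMeasure μ] (s : ℝ) :
    Var[fun x => cos (s * x); μ] =
      (1 + ∫ x, cos (2 * s * x) ∂μ) / 2 - (∫ x, cos (s * x) ∂μ) ^ 2 := by
  have hsq : (fun x => cos (s * x)) ^ 2 = fun x => (1 + cos (2 * s * x)) / 2 := by
    ext x
    simp only [Pi.pow_apply, cos_sq, mul_assoc]
    ring
  rw [variance_eq_sub (memLp_cos_mul s 2), hsq, integral_div,
    integral_add (integrable_const 1) ((memLp_cos_mul (2 * s) 1).integrable le_rfl)]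
  simp

end

theorem stmt1_general (f : ℝ → ℝ) (μ : Measure ℝ) [IsProbabilityMeasure μ]
    (hf : ∀ s : ℝ, f s = ∫ x, Real.cos (s * x) ∂μ)
    (heq : ∀ s : ℝ, f (2 * s) = 2 * f s ^ 2 - 1) :
    ∃ a : ℝ, ∀ s : ℝ, f s = Real.cos (a * s) := by
  have hae (s : ℝ) : ∀ᵐ x ∂μ, cos (s * x) = f s := by
    have hvar : Var[fun x => cos (s * x); μ] = 0 := by
      rw [variance_cos_mul, ← hf, ← hf, heq]
      ring
    simpa [hf] using ae_eq_integral_of_variance_eq_zero (memLp_cos_mul s 2) hvar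
  obtain ⟨a, ha⟩ := (ae_all_iff.mpr fun q : ℚ => hae q).exists
  have hcont : Continuous f := (funext hf : f = _) ▸ continuous_integral_cos_mul
  refine ⟨a, congrFun (Continuous.ext_on Rat.denseRange_cast hcont (by fun_prop) ?_)⟩
  rintro _ ⟨q, rfl⟩
  simpa [mul_comm] using (ha q).symm

/-- If a real-valued characteristic function `f` of a symmetric probability measure on `ℝ`
satisfies `f(2s) = 2 f(s)² − 1`, then `f(s) = cos (a s)` for some real `a`. -/
theorem stmt1 (f : ℝ → ℝ) (μ : Measure ℝ) [IsProbabilityMeasure μ]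
    (hsymm : μ.map (fun x => -x) = μ)
    (hf : ∀ s : ℝ, f s = ∫ x, Real.cos (s * x) ∂μ)
    (heq : ∀ s : ℝ, f (2 * s) = 2 * f s ^ 2 - 1) :
    ∃ a : ℝ, ∀ s : ℝ, f s = Real.cos (a * s) :=
  stmt1_general f μ hf heq
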